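/- In the commutative ring S = ℤ[a, λ]/⟨a⁴, λ⁶ + 4λ⁵a + 10λ⁴a² + 20λ³a³⟩, the coefficient of λ⁵a³ in (λ + 2a)⁶·(λa) equals 18. -/

import Mathlib

/-!
Since `a⁴ = 0`, only the terms `λ⁷a + 12λ⁶a² + 60λ⁵a³` of `(λ + 2a)⁶ · λa` survive. Multiplying the
relation for `λ⁶` by `a²` gives `λ⁶a² = -4λ⁵a³`, and multiplying it by `λa` gives
`λ⁷a = -4λ⁶a² - 10λ⁵a³ = 6λ⁵a³`, so the product is `(6 - 48 + 60)λ⁵a³ = 18λ⁵a³`.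
-/

open MvPolynomial Finset

noncomputable section

/-- The ideal ⟨a⁴, λ⁶ + 4λ⁵a + 10λ⁴a² + 20λ³a³⟩ in ℤ[a, λ], with `X 0 = a`, `X 1 = λ`. -/
def Icon : Ideal (MvPolynomial (Fin 2) ℤ) :=
  Ideal.span {(X 0 : MvPolynomial (Fin 2) ℤ) ^ 4,
    (X 1) ^ 6 + 4 * (X 1) ^ 5 * X 0 + 10 * (X 1) ^ 4 * (X 0) ^ 2 + 20 * (X 1) ^ 3 * (X 0) ^ 3}

/-- The ring S = ℤ[a, λ]/⟨a⁴, λ⁶ + 4λ⁵a + 10λ⁴a² + 20λ³a³⟩. -/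
def Sg := MvPolynomial (Fin 2) ℤ ⧸ Icon

instance : CommRing Sg := Ideal.Quotient.commRing Icon

def ag : Sg := Ideal.Quotient.mk Icon (X 0)
def lg : Sg := Ideal.Quotient.mk Icon (X 1)

theorem add_two_mul_pow_six_mul_eq {R : Type*} [CommRing R] {a l : R} (ha : a ^ 4 = 0)
    (hl : l ^ 6 + 4 * l ^ 5 * a + 10 * l ^ 4 * a ^ 2 + 20 * l ^ 3 * a ^ 3 = 0) :
    (l + 2 * a) ^ 6 * (l * a) = 18 * (l ^ 5 * a ^ 3) := by
  linear_combination (l * a + 8 * a ^ 2) * hl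
    + (64 * l * a ^ 3 + 192 * l ^ 2 * a ^ 2 + 80 * l ^ 3 * a + 60 * l ^ 4) * ha

theorem ag_pow_four : ag ^ 4 = 0 := by
  have h : Ideal.Quotient.mk Icon ((X 0) ^ 4) = 0 :=
    Ideal.Quotient.eq_zero_iff_mem.2 (Ideal.subset_span (Or.inl rfl))
  rw [map_pow] at h
  exact h

theorem lg_relation : lg ^ 6 + 4 * lg ^ 5 * ag + 10 * lg ^ 4 * ag ^ 2 + 20 * lg ^ 3 * ag ^ 3 = 0 := by
  have h : Ideal.Quotient.mk Icon ((X 1) ^ 6 + 4 * (X 1) ^ 5 * X 0 + 10 * (X 1) ^ 4 * (X 0) ^ 2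
      + 20 * (X 1) ^ 3 * (X 0) ^ 3) = 0 :=
    Ideal.Quotient.eq_zero_iff_mem.2 (Ideal.subset_span (Or.inr rfl))
  simp only [map_add, map_mul, map_pow, map_ofNat] at h
  exact h

/-- The coefficient of λ⁵a³ in (λ + 2a)⁶·(λa) equals 18. -/
theorem stmt5 : ∃ c : Fin 6 → Fin 4 → ℤ,
    (lg + 2 * ag) ^ 6 * (lg * ag) =
      (∑ i : Fin 6, ∑ j : Fin 4, c i j • (lg ^ (i : ℕ) * ag ^ (j : ℕ))) ∧
    c 5 3 = 18 := by
  refine ⟨Pi.single 5 (Pi.single 3 18), ?_, rfl⟩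
  rw [add_two_mul_pow_six_mul_eq ag_pow_four lg_relation]
  simp [Fin.sum_univ_succ]

end
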